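/- The number of saturated chains of length n in the partition lattice of {0,1,...,n} starting at the discrete partition that map under H to a given fixed maximal chain ∅ = A_0 ⊂ A_1 ⊂ ... ⊂ A_n in the subset lattice of {1,...,n} equals the product over k = 1,...,n of the number of blocks of the partition at step k−1 whose minimum is strictly less than the element added at step k. -/

import Mathlib

/-- The map `H` sending a partition of `{0,1,...,n}` to the union of the sets
`U \ {min U}` over its blocks `U`. -/
def H {n : ℕ} (P : Finpartition (Finset.range (n + 1))) : Finset ℕ :=
  P.parts.attach.sup fun U => U.1.erase (U.1.min' (P.nonempty_of_mem_parts U.2))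

/-!
A cover `P ⋖ Q` in the partition lattice merges two blocks of `P`, and `H Q = insert x (H P)` with
`x ∉ H P` says that one of them is the block whose minimum is `x` while the other contains an
element below `x`. Conversely every such merge is a cover with this property, so a partition `P`
with `H P = A_{k-1}` has exactly as many admissible successors as it has blocks meeting `[0, a_k)`.
That number only depends on `H P`: it is the number of block minima below `a_k`. Counting the
chains one step at a time then gives the product.
-/

open Finset

section Paths

variable {α : Type*}

def IsPath {n : ℕ} (R : Fin n → α → α → Prop) (S : Fin (n + 1) → α → Prop) (x₀ : α)
    (d : Fin (n + 1) → α) : Prop :=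
  d 0 = x₀ ∧ (∀ i, R i (d i.castSucc) (d i.succ)) ∧ ∀ k, S k (d k)

theorem isPath_iff_tail {n : ℕ} {R : Fin (n + 1) → α → α → Prop} {S : Fin (n + 2) → α → Prop}
    {x₀ : α} {d : Fin (n + 2) → α} :
    IsPath R S x₀ d ↔ d 0 = x₀ ∧ S 0 x₀ ∧ R 0 x₀ (d 1) ∧
      IsPath (fun i ↦ R i.succ) (fun k ↦ S k.succ) (d 1) (Fin.tail d) := by
  simp only [IsPath, Fin.forall_fin_succ, Fin.tail, Fin.succ_castSucc, Fin.succ_zero_eq_one,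
    Fin.castSucc_zero]
  constructor <;> rintro ⟨rfl, h⟩ <;> tauto

def isPathEquivSigma {n : ℕ} {R : Fin (n + 1) → α → α → Prop} {S : Fin (n + 2) → α → Prop}
    {x₀ : α} (h₀ : S 0 x₀) :
    {d // IsPath R S x₀ d} ≃
      Σ y : {y // R 0 x₀ y ∧ S 1 y}, {d // IsPath (fun i ↦ R i.succ) (fun k ↦ S k.succ) y d} where
  toFun d :=
    have h := isPath_iff_tail.1 d.2
    ⟨⟨d.1 1, h.2.2.1, h.2.2.2.2.2 0⟩, ⟨Fin.tail d.1, h.2.2.2⟩⟩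
  invFun p := ⟨Fin.cons x₀ p.2.1, isPath_iff_tail.2
    ⟨rfl, h₀, by simpa [p.2.2.1] using p.1.2.1, by simpa [p.2.2.1] using p.2.2⟩⟩
  left_inv d := Subtype.ext (by simpa [d.2.1] using Fin.cons_self_tail d.1)
  right_inv p := Sigma.subtype_ext (Subtype.ext p.2.2.1) rfl

theorem card_isPath_eq_prod [Finite α] : ∀ {n : ℕ} (R : Fin n → α → α → Prop)
    (S : Fin (n + 1) → α → Prop) (f : Fin n → ℕ) (x₀ : α), S 0 x₀ →
    (∀ i x, S i.castSucc x → Nat.card {y // R i x y ∧ S i.succ y} = f i) →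
    Nat.card {d // IsPath R S x₀ d} = ∏ i, f i
  | 0, R, S, f, x₀, h₀, _ => by
    rw [Fin.prod_univ_zero, Nat.card_eq_one_iff_exists]
    refine ⟨⟨fun _ ↦ x₀, rfl, finZeroElim, fun k ↦ by rwa [Fin.fin_one_eq_zero k]⟩, fun d ↦ ?_⟩
    exact Subtype.ext (funext fun k ↦ by rw [Fin.fin_one_eq_zero k]; exact d.2.1)
  | n + 1, R, S, f, x₀, h₀, hstep => by
    classical
    have := Fintype.ofFinite α
    have hfiber (y : {y // R 0 x₀ y ∧ S 1 y}) :
        Nat.card {d // IsPath (fun i ↦ R i.succ) (fun k ↦ S k.succ) y d} = ∏ i : Fin n, f i.succ :=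
      card_isPath_eq_prod _ _ _ _ y.2.2 fun i x hx ↦ hstep i.succ x hx
    rw [Nat.card_congr (isPathEquivSigma h₀), Nat.card_sigma, sum_congr rfl fun y _ ↦ hfiber y,
      sum_const, card_univ, smul_eq_mul, ← Nat.card_eq_fintype_card, Fin.prod_univ_succ,
      ← hstep 0 x₀ h₀]
    rfl

end Paths

namespace Finpartition

section DecidableEq

variable {α : Type*} [DecidableEq α] {s U V : Finset α} {P Q : Finpartition s}

/- Choosing a `P`-part inside each `Q`-part is injective, hence bijective when the counts agree;
so each `P`-part is the chosen one of the `Q`-part containing it, which gives `Q ≤ P`. -/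
theorem eq_of_le_of_card_parts_eq (h : P ≤ Q) (hc : #Q.parts = #P.parts) : P = Q := by
  choose f hfP hfq using fun q (hq : q ∈ Q.parts) ↦ exists_le_of_le h hq
  have hinj : ∀ q₁ q₂ hq₁ hq₂, f q₁ hq₁ = f q₂ hq₂ → q₁ = q₂ := by
    intro q₁ q₂ hq₁ hq₂ he
    obtain ⟨y, hy⟩ := P.nonempty_of_mem_parts (hfP q₁ hq₁)
    exact Q.eq_of_mem_parts hq₁ hq₂ (hfq q₁ hq₁ hy) (hfq q₂ hq₂ (he ▸ hy))
  have hsurj := surj_on_of_inj_on_of_card_le f hfP hinj hc.ge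
  refine le_antisymm h fun q hq ↦ ⟨f q hq, hfP q hq, fun y hy ↦ ?_⟩
  obtain ⟨p, hp, hyp⟩ := P.exists_mem (Q.le hq hy)
  obtain ⟨q', hq', rfl⟩ := hsurj p hp
  obtain rfl := Q.eq_of_mem_parts hq hq' hy (hfq q' hq' hyp)
  exact hyp

theorem covBy_of_le_of_card_parts_add_one (h : P ≤ Q) (hc : #Q.parts + 1 = #P.parts) :
    P ⋖ Q := by
  refine ⟨h.lt_of_ne (by rintro rfl; omega), fun R hPR hRQ ↦ ?_⟩
  have := card_mono hPR.le
  have := card_mono hRQ.le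
  rcases (by omega : #R.parts = #P.parts ∨ #Q.parts = #R.parts) with hR | hR
  · exact hPR.ne (eq_of_le_of_card_parts_eq hPR.le hR)
  · exact hRQ.ne (eq_of_le_of_card_parts_eq hRQ.le hR)

theorem part_subset_of_le (h : P ≤ Q) {q : Finset α} (hq : q ∈ Q.parts) {a : α} (ha : a ∈ q) :
    P.part a ⊆ q := by
  obtain ⟨q', hq', hsub⟩ := h (P.part_mem.2 (Q.le hq ha))
  rwa [Q.eq_of_mem_parts hq hq' ha (hsub (P.mem_part (Q.le hq ha)))]

@[simps]
def merge (P : Finpartition s) (hU : U ∈ P.parts) (hV : V ∈ P.parts) : Finpartition s where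
  parts := insert (U ∪ V) ((P.parts.erase U).erase V)
  supIndep := by
    rw [supIndep_iff_pairwiseDisjoint, coe_insert]
    refine (P.disjoint.subset fun W hW ↦ ?_).insert fun W hW _ ↦ ?_
    · exact mem_of_mem_erase (mem_of_mem_erase hW)
    · obtain ⟨⟨hW, hWU⟩, hWV⟩ : (W ∈ P.parts ∧ W ≠ U) ∧ W ≠ V := by simpa using hW
      exact disjoint_union_left.2 ⟨P.disjoint hU hW hWU.symm, P.disjoint hV hW hWV.symm⟩
  sup_parts := by
    conv_rhs => rw [← P.sup_parts]
    ext y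
    simp only [mem_sup, mem_insert, mem_erase, id]
    grind
  bot_notMem := by
    simp only [mem_insert, mem_erase, not_or, not_and_or]
    exact ⟨fun h ↦ P.ne_bot hU (eq_bot_iff.2 (h ▸ subset_union_left)),
      Or.inr (Or.inr P.bot_notMem)⟩

variable (hU : U ∈ P.parts) (hV : V ∈ P.parts)

theorem le_merge : P ≤ P.merge hU hV := by
  intro W hW
  by_cases hWU : W = U
  · exact ⟨U ∪ V, mem_insert_self _ _, hWU ▸ subset_union_left⟩
  by_cases hWV : W = V
  · exact ⟨U ∪ V, mem_insert_self _ _, hWV ▸ subset_union_right⟩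
  exact ⟨W, by simp [hW, hWU, hWV], le_rfl⟩

theorem merge_le {q : Finset α} (hPQ : P ≤ Q) (hq : q ∈ Q.parts) (hUq : U ⊆ q) (hVq : V ⊆ q) :
    P.merge hU hV ≤ Q := by
  intro W hW
  rcases mem_insert.1 hW with rfl | hW
  · exact ⟨q, hq, union_subset hUq hVq⟩
  · exact hPQ (mem_of_mem_erase (mem_of_mem_erase hW))

theorem card_parts_merge (hUV : U ≠ V) : #(P.merge hU hV).parts + 1 = #P.parts := by
  have hUVP : U ∪ V ∉ P.parts := fun h ↦ by
    obtain ⟨y, hy⟩ := P.nonempty_of_mem_parts hV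
    obtain ⟨x, hx⟩ := P.nonempty_of_mem_parts hU
    have h₁ := P.eq_of_mem_parts h hU (mem_union_left _ hx) hx
    exact hUV (P.eq_of_mem_parts hU hV (h₁ ▸ mem_union_right _ hy) hy)
  have h₂ : 2 ≤ #P.parts := one_lt_card.2 ⟨U, hU, V, hV, hUV⟩
  rw [merge_parts, card_insert_of_notMem fun h ↦ hUVP (mem_of_mem_erase (mem_of_mem_erase h)),
    card_erase_of_mem (mem_erase.2 ⟨hUV.symm, hV⟩), card_erase_of_mem hU]
  omega

theorem covBy_merge (hUV : U ≠ V) : P ⋖ P.merge hU hV :=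
  covBy_of_le_of_card_parts_add_one (le_merge hU hV) (card_parts_merge hU hV hUV)

theorem part_merge_of_mem_right {x : α} (hx : x ∈ V) : (P.merge hU hV).part x = U ∪ V :=
  part_eq_of_mem _ (mem_insert_self _ _) (mem_union_right _ hx)

end DecidableEq

section LinearOrder

variable {α : Type*} [LinearOrder α] {s : Finset α} {P Q : Finpartition s} {x : α}

def nonMinima (P : Finpartition s) : Finset α :=
  P.parts.biUnion fun p ↦ {y ∈ p | ∃ z ∈ p, z < y}

theorem mem_nonMinima {y : α} : y ∈ P.nonMinima ↔ ∃ p ∈ P.parts, y ∈ p ∧ ∃ z ∈ p, z < y := by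
  simp [nonMinima]

theorem nonMinima_subset : P.nonMinima ⊆ s := fun y hy ↦ by
  obtain ⟨p, hp, hyp, -⟩ := mem_nonMinima.1 hy
  exact P.le hp hyp

theorem le_of_notMem_nonMinima {p : Finset α} {z : α} (hxP : x ∉ P.nonMinima) (hp : p ∈ P.parts)
    (hx : x ∈ p) (hz : z ∈ p) : x ≤ z :=
  not_lt.1 fun h ↦ hxP (mem_nonMinima.2 ⟨p, hp, hx, z, hz, h⟩)

theorem nonMinima_merge {U V : Finset α} (hU : U ∈ P.parts) (hV : V ∈ P.parts) (hxV : x ∈ V)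
    (hxP : x ∉ P.nonMinima) (hUx : ∃ m ∈ U, m < x) :
    (P.merge hU hV).nonMinima = insert x P.nonMinima := by
  obtain ⟨m, hmU, hmx⟩ := hUx
  have hx_le {z} (hz : z ∈ V) : x ≤ z := le_of_notMem_nonMinima hxP hV hxV hz
  ext y
  simp only [mem_nonMinima, merge_parts, mem_insert, mem_erase, exists_eq_or_imp, mem_union]
  -- only `x` changes status: `m < x` now lies in its block
  grind

theorem card_covBy_nonMinima_eq_insert (hx : x ∈ s) (hxP : x ∉ P.nonMinima) :
    Nat.card {Q // P ⋖ Q ∧ Q.nonMinima = insert x P.nonMinima} =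
      #{p ∈ P.parts | ∃ m ∈ p, m < x} := by
  have hV := P.part_mem.2 hx
  have hxV := P.mem_part hx
  have hne {U} (hUx : ∃ m ∈ U, m < x) : U ≠ P.part x := by
    rintro rfl
    obtain ⟨m, hm, hmx⟩ := hUx
    exact (le_of_notMem_nonMinima hxP hV hxV hm).not_gt hmx
  let f : {p // p ∈ P.parts.filter fun p ↦ ∃ m ∈ p, m < x} →
      {Q // P ⋖ Q ∧ Q.nonMinima = insert x P.nonMinima} := fun U ↦
    ⟨P.merge (mem_filter.1 U.2).1 hV, covBy_merge _ _ (hne (mem_filter.1 U.2).2),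
      nonMinima_merge _ _ hxV hxP (mem_filter.1 U.2).2⟩
  rw [← Nat.card_eq_finsetCard]
  refine (Nat.card_eq_of_bijective f ⟨fun U₁ U₂ h ↦ ?_, fun Q ↦ ?_⟩).symm
  · have hU₁ := mem_filter.1 U₁.2
    have hU₂ := mem_filter.1 U₂.2
    have hunion : U₁.1 ∪ P.part x = U₂.1 ∪ P.part x := by
      rw [← part_merge_of_mem_right hU₁.1 hV hxV, ← part_merge_of_mem_right hU₂.1 hV hxV]
      exact congrArg (fun Q : {Q // _} ↦ Q.1.part x) h
    have hdisj₁ : Disjoint U₁.1 (P.part x) := P.disjoint hU₁.1 hV (hne hU₁.2)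
    have hdisj₂ : Disjoint U₂.1 (P.part x) := P.disjoint hU₂.1 hV (hne hU₂.2)
    apply Subtype.ext
    rw [← union_sdiff_cancel_right hdisj₁, ← union_sdiff_cancel_right hdisj₂, hunion]
  · obtain ⟨Q, hPQ, hQ⟩ := Q
    obtain ⟨q, hq, hxq, z, hzq, hzx⟩ := mem_nonMinima.1 (hQ ▸ mem_insert_self x P.nonMinima)
    have hz := Q.le hq hzq
    have hU := P.part_mem.2 hz
    have hUx : ∃ m ∈ P.part z, m < x := ⟨z, P.mem_part hz, hzx⟩
    refine ⟨⟨P.part z, mem_filter.2 ⟨hU, hUx⟩⟩, Subtype.ext ?_⟩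
    exact (merge_le hU hV hPQ.le hq (part_subset_of_le hPQ.le hq hzq)
      (part_subset_of_le hPQ.le hq hxq)).eq_of_not_lt (hPQ.2 (covBy_merge hU hV (hne hUx)).lt)

theorem card_filter_parts_exists_lt :
    #{p ∈ P.parts | ∃ m ∈ p, m < x} = #{m ∈ s \ P.nonMinima | m < x} := by
  refine (card_nbij P.part (fun m hm ↦ ?_) (fun m₁ hm₁ m₂ hm₂ h ↦ ?_) fun p hp ↦ ?_).symm
  · obtain ⟨⟨hm, -⟩, hmx⟩ : (m ∈ s ∧ m ∉ P.nonMinima) ∧ m < x := by simpa using hm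
    exact mem_filter.2 ⟨P.part_mem.2 hm, m, P.mem_part hm, hmx⟩
  · simp only [coe_filter, mem_sdiff, Set.mem_ofPred_eq] at hm₁ hm₂
    have hp₂ := P.part_mem.2 hm₂.1.1
    have hm₁p : m₁ ∈ P.part m₂ := h ▸ P.mem_part hm₁.1.1
    exact le_antisymm (le_of_notMem_nonMinima hm₁.1.2 hp₂ hm₁p (P.mem_part hm₂.1.1))
      (le_of_notMem_nonMinima hm₂.1.2 hp₂ (P.mem_part hm₂.1.1) hm₁p)
  · obtain ⟨hp, m, hm, hmx⟩ := mem_filter.1 hp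
    have hne : p.Nonempty := ⟨m, hm⟩
    have hμ := p.min'_mem hne
    refine ⟨p.min' hne, ?_, P.part_eq_of_mem hp hμ⟩
    simp only [coe_filter, mem_sdiff, Set.mem_ofPred_eq, mem_nonMinima, not_exists, not_and]
    refine ⟨⟨P.le hp hμ, fun p' hp' hμp' z hz ↦ ?_⟩, (min'_le p m hm).trans_lt hmx⟩
    obtain rfl := P.eq_of_mem_parts hp hp' hμ hμp'
    exact not_lt.2 (min'_le p z hz)

end LinearOrder

end Finpartition


theorem H_eq_nonMinima {n : ℕ} (P : Finpartition (range (n + 1))) : H P = P.nonMinima := by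
  ext y
  simp only [H, mem_sup, mem_attach, true_and, Subtype.exists, mem_erase,
    Finpartition.mem_nonMinima]
  refine exists_congr fun U ↦ ⟨fun ⟨hU, hne, hy⟩ ↦ ⟨hU, hy, _, min'_mem _ ⟨y, hy⟩, ?_⟩,
    fun ⟨hU, hy, z, hz, hzy⟩ ↦ ⟨hU, ?_, hy⟩⟩
  · exact (min'_le U y hy).lt_of_ne' hne
  · exact ((min'_le U z hz).trans_lt hzy).ne'

theorem stmt_17_general (n : ℕ) (A : Fin (n + 1) → Finset ℕ) (a : Fin n → ℕ)
    (hstep : ∀ i : Fin n, a i ∉ A i.castSucc ∧ A i.succ = insert (a i) (A i.castSucc))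
    (c : Fin (n + 1) → Finpartition (Finset.range (n + 1)))
    (hc0 : c 0 = ⊥)
    (hcH : ∀ k : Fin (n + 1), H (c k) = A k) :
    Nat.card {d : Fin (n + 1) → Finpartition (Finset.range (n + 1)) //
        d 0 = ⊥ ∧ (∀ i : Fin n, d i.castSucc ⋖ d i.succ) ∧ ∀ k : Fin (n + 1), H (d k) = A k} =
      ∏ i : Fin n, ((c i.castSucc).parts.filter fun U => ∃ m ∈ U, m < a i).card := by
  simp only [H_eq_nonMinima] at hcH ⊢
  have ha (i : Fin n) : a i ∈ range (n + 1) :=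
    Finpartition.nonMinima_subset (by rw [hcH, (hstep i).2]; exact mem_insert_self _ _)
  have hcount (i : Fin n) (P : Finpartition (range (n + 1))) (hP : P.nonMinima = A i.castSucc) :
      Nat.card {Q // P ⋖ Q ∧ Q.nonMinima = A i.succ} =
        #{m ∈ range (n + 1) \ A i.castSucc | m < a i} := by
    rw [(hstep i).2, ← hP, Finpartition.card_covBy_nonMinima_eq_insert (ha i) (hP ▸ (hstep i).1),
      Finpartition.card_filter_parts_exists_lt]
  refine (card_isPath_eq_prod (fun _ ↦ (· ⋖ ·)) (fun k P ↦ Finpartition.nonMinima P = A k) _ ⊥ (hc0 ▸ hcH 0)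
    hcount).trans (prod_congr rfl fun i _ ↦ ?_)
  rw [Finpartition.card_filter_parts_exists_lt, hcH]

theorem stmt_17 (n : ℕ) (A : Fin (n + 1) → Finset ℕ) (a : Fin n → ℕ)
    (h0 : A 0 = ∅)
    (hstep : ∀ i : Fin n, a i ∉ A i.castSucc ∧ A i.succ = insert (a i) (A i.castSucc))
    (htop : A (Fin.last n) = Finset.Icc 1 n)
    (c : Fin (n + 1) → Finpartition (Finset.range (n + 1)))
    (hc0 : c 0 = ⊥) (hccov : ∀ i : Fin n, c i.castSucc ⋖ c i.succ)
    (hcH : ∀ k : Fin (n + 1), H (c k) = A k) :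
    Nat.card {d : Fin (n + 1) → Finpartition (Finset.range (n + 1)) //
        d 0 = ⊥ ∧ (∀ i : Fin n, d i.castSucc ⋖ d i.succ) ∧ ∀ k : Fin (n + 1), H (d k) = A k} =
      ∏ i : Fin n, ((c i.castSucc).parts.filter fun U => ∃ m ∈ U, m < a i).card :=
  stmt_17_general n A a hstep c hc0 hcH
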